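/- Let f : ℝ → ℝ be continuously differentiable with bounded derivative, with Lipschitz/derivative bound ‖f'‖_∞, and let a, b ≥ 0. Define g : ℝ → ℝ by g(x) = ∫_ℝ f(x + b z) p(z) dz. Then the variance of g under the centered Gaussian measure of variance a² on ℝ satisfies Var(g) = ∫_ℝ g(a u)² p(u) du − ( ∫_ℝ g(a u) p(u) du )² ≤ ‖f'‖_∞² · a². (Variance bound for the conditional expectation of a Lipschitz function of a Gaussian variable given a Gaussian component.) -/

import Mathlib

open MeasureTheory Real Set

/-- Standard normal density `p(z) = (2π)^{-1/2} e^{-z²/2}`. -/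
noncomputable def stdPdf (z : ℝ) : ℝ :=
  (Real.sqrt (2 * Real.pi))⁻¹ * Real.exp (-z ^ 2 / 2)

/-- `g(x) = ∫_ℝ f(x + b z) p(z) dz`: the Gaussian smoothing of `f` at scale `b`. -/
noncomputable def gaussSmooth (f : ℝ → ℝ) (b : ℝ) (x : ℝ) : ℝ :=
  ∫ z : ℝ, f (x + b * z) * stdPdf z

/-!
Integrals against `stdPdf` are expectations under `gaussianReal 0 1`, so the left side is
`Var[g ∘ X]` for `X u = a u`. Gaussian smoothing does not increase Lipschitz constants, since
`g x - g y` is an average of `f (x + b z) - f (y + b z)`. For `M`-Lipschitz `g`, centring at the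
mean `m` of `X` gives `Var[g ∘ X] ≤ E[(g ∘ X - g m)²] ≤ M² E[(X - m)²] = M² a²`.
-/

open ProbabilityTheory
open scoped NNReal ENNReal

namespace LipschitzWith

variable {Ω : Type*} [MeasurableSpace Ω] {μ : Measure Ω} {K : ℝ≥0}

theorem memLp_comp {E F : Type*} [NormedAddCommGroup E] [NormedAddCommGroup F]
    [IsFiniteMeasure μ] {p : ℝ≥0∞} {h : E → F} (hh : LipschitzWith K h) {X : Ω → E}
    (hX : MemLp X p μ) : MemLp (fun ω ↦ h (X ω)) p μ := by
  have h₀ : LipschitzWith K (fun x ↦ h x - h 0) := by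
    simpa using hh.sub (LipschitzWith.const (h 0))
  convert (h₀.comp_memLp (sub_self _) hX).add (memLp_const (h 0)) using 1
  ext ω
  simp

theorem variance_comp_le [IsProbabilityMeasure μ] {h : ℝ → ℝ} (hh : LipschitzWith K h)
    {X : Ω → ℝ} (hX : MemLp X 2 μ) :
    Var[fun ω ↦ h (X ω); μ] ≤ K ^ 2 * Var[X; μ] := by
  set m := μ[X]
  have hmeas : AEStronglyMeasurable (fun ω ↦ h (X ω)) μ :=
    hh.continuous.comp_aestronglyMeasurable hX.1
  have hpoint (ω : Ω) : (h (X ω) - h m) ^ 2 ≤ K ^ 2 * (X ω - m) ^ 2 := by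
    rw [← sq_abs (h _ - _), ← sq_abs (X ω - m), ← mul_pow]
    gcongr
    simpa only [Real.dist_eq] using hh.dist_le_mul (X ω) m
  calc Var[fun ω ↦ h (X ω); μ] = Var[fun ω ↦ h (X ω) - h m; μ] :=
        (variance_sub_const hmeas _).symm
    _ ≤ ∫ ω, (h (X ω) - h m) ^ 2 ∂μ :=
        variance_le_expectation_sq (hmeas.sub aestronglyMeasurable_const)
    _ ≤ ∫ ω, K ^ 2 * (X ω - m) ^ 2 ∂μ :=
        integral_mono_of_nonneg (.of_forall fun _ ↦ sq_nonneg _)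
          ((hX.sub (memLp_const m)).integrable_sq.const_mul _) (.of_forall hpoint)
    _ = K ^ 2 * Var[X; μ] := by
        rw [integral_const_mul, variance_eq_integral hX.aemeasurable]

theorem integral_comp_add {E F : Type*} [NormedAddCommGroup E] [NormedAddCommGroup F]
    [NormedSpace ℝ F] [IsProbabilityMeasure μ] {f : E → F} (hf : LipschitzWith K f)
    {φ : Ω → E} (hint : ∀ x, Integrable (fun z ↦ f (x + φ z)) μ) :
    LipschitzWith K (fun x ↦ ∫ z, f (x + φ z) ∂μ) := by
  refine .of_dist_le_mul fun x y ↦ ?_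
  rw [dist_eq_norm, ← integral_sub (hint x) (hint y)]
  simpa using norm_integral_le_of_norm_le_const (μ := μ) (C := K * dist x y)
    (.of_forall fun z ↦ by simpa [dist_eq_norm] using hf.dist_le_mul (x + φ z) (y + φ z))

end LipschitzWith

theorem integral_mul_stdPdf (φ : ℝ → ℝ) :
    ∫ u, φ u * stdPdf u = ∫ u, φ u ∂gaussianReal 0 1 := by
  rw [integral_gaussianReal_eq_integral_smul one_ne_zero]
  congr 1 with u
  simp [gaussianPDFReal, stdPdf, mul_comm]

theorem LipschitzWith.gaussSmooth {f : ℝ → ℝ} {K : ℝ≥0} (hf : LipschitzWith K f) (b : ℝ) :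
    LipschitzWith K (gaussSmooth f b) := by
  have hint (x : ℝ) : Integrable (fun z ↦ f (x + b * z)) (gaussianReal 0 1) :=
    memLp_one_iff_integrable.mp <| hf.memLp_comp <|
      (memLp_const x).add ((memLp_id_gaussianReal 1).const_mul b)
  have hg : _root_.gaussSmooth f b = fun x ↦ ∫ z, f (x + b * z) ∂gaussianReal 0 1 :=
    funext fun x ↦ integral_mul_stdPdf _
  rw [hg]
  exact hf.integral_comp_add hint

theorem gaussSmooth_variance_bound_general (f : ℝ → ℝ) (hf : ContDiff ℝ 1 f)
    (M : ℝ) (hM : ∀ x : ℝ, |deriv f x| ≤ M)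
    (a b : ℝ) :
    (∫ u : ℝ, (gaussSmooth f b (a * u)) ^ 2 * stdPdf u)
        - (∫ u : ℝ, gaussSmooth f b (a * u) * stdPdf u) ^ 2
      ≤ M ^ 2 * a ^ 2 := by
  have hM₀ : 0 ≤ M := (abs_nonneg _).trans (hM 0)
  have hf_lip : LipschitzWith (⟨M, hM₀⟩ : ℝ≥0) f :=
    lipschitzWith_of_nnnorm_deriv_le (hf.differentiable one_ne_zero) fun x ↦ hM x
  have hg := hf_lip.gaussSmooth b
  have hX : MemLp (fun u : ℝ ↦ a * u) 2 (gaussianReal 0 1) :=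
    (memLp_id_gaussianReal 2).const_mul a
  rw [integral_mul_stdPdf, integral_mul_stdPdf]
  calc _ = Var[fun u ↦ gaussSmooth f b (a * u); gaussianReal 0 1] :=
        (variance_eq_sub (hg.memLp_comp hX)).symm
    _ ≤ M ^ 2 * Var[fun u ↦ a * u; gaussianReal 0 1] := hg.variance_comp_le hX
    _ = M ^ 2 * a ^ 2 := by
        rw [variance_const_mul, ← Function.id_def, variance_id_gaussianReal, NNReal.coe_one,
          mul_one]

/-- Variance bound for the conditional expectation of a Lipschitz function of a
Gaussian variable given a Gaussian component: if `f` is `C¹` with `|f'| ≤ M`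
and `a, b ≥ 0`, then the variance of `g(x) = ∫ f(x + bz) p(z) dz` under the
centered Gaussian measure of variance `a²` satisfies
`∫ g(au)² p(u) du − (∫ g(au) p(u) du)² ≤ M² a²`. -/
theorem gaussSmooth_variance_bound (f : ℝ → ℝ) (hf : ContDiff ℝ 1 f)
    (M : ℝ) (hM : ∀ x : ℝ, |deriv f x| ≤ M)
    (a b : ℝ) (ha : 0 ≤ a) (hb : 0 ≤ b) :
    (∫ u : ℝ, (gaussSmooth f b (a * u)) ^ 2 * stdPdf u)
        - (∫ u : ℝ, gaussSmooth f b (a * u) * stdPdf u) ^ 2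
      ≤ M ^ 2 * a ^ 2 :=
  gaussSmooth_variance_bound_general f hf M hM a b
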